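/- arXiv:2105.04287 — 5 statements merged into one kernel-verified Lean document; each statement's English description precedes it below -/
import Mathlib

section
/- If f is a log-concave probability density on the real line with distribution function F, then the ratio x ↦ f(x)/F(x) is non-increasing on the set {x : 0 < F(x) < 1}, and the ratio x ↦ f(x)/(1 - F(x)) is non-decreasing on that set. -/
open MeasureTheory Set

/-!
For a log-concave `f` and `t ≤ x ≤ y`, the pair `(x, t + y - x)` has the same sum as `(t, y)`
and lies between its entries, so `f t * f y ≤ f x * f (t + y - x)`. Integrating this in `t` over
`t ≤ x` gives `f y * F x ≤ f x * F y`, and integrating its mirror image over `t > y` gives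
`f x * (1 - F y) ≤ f y * (1 - F x)`.
-/

theorem ConcaveOn.map_add_map_le_map_add_map {𝕜 : Type*} [Field 𝕜] [LinearOrder 𝕜]
    [IsStrictOrderedRing 𝕜] {s : Set 𝕜} {φ : 𝕜 → 𝕜} (hφ : ConcaveOn 𝕜 s φ) {t x y : 𝕜}
    (ht : t ∈ s) (hy : y ∈ s) (htx : t ≤ x) (hxy : x ≤ y) :
    φ t + φ y ≤ φ x + φ (t + y - x) := by
  rcases (htx.trans hxy).eq_or_lt with rfl | hty
  · obtain rfl : x = t := le_antisymm hxy htx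
    simp
  have hyt : 0 < y - t := sub_pos.mpr hty
  set a := (y - x) / (y - t)
  set b := (x - t) / (y - t)
  have ha : 0 ≤ a := div_nonneg (sub_nonneg.mpr hxy) hyt.le
  have hb : 0 ≤ b := div_nonneg (sub_nonneg.mpr htx) hyt.le
  have hab : a + b = 1 := by rw [← add_div, sub_add_sub_cancel, div_self hyt.ne']
  have hx : a • t + b • y = x := by simp only [smul_eq_mul, a, b]; field_simp; ring
  have hz : b • t + a • y = t + y - x := by simp only [smul_eq_mul, a, b]; field_simp; ring
  have h₁ := hφ.2 ht hy ha hb hab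
  have h₂ := hφ.2 ht hy hb ha (by rw [add_comm, hab])
  rw [hx, smul_eq_mul, smul_eq_mul] at h₁
  rw [hz, smul_eq_mul, smul_eq_mul] at h₂
  linear_combination h₁ + h₂ - (φ t + φ y) * hab

theorem mul_le_mul_add_sub_of_concaveOn_log {f : ℝ → ℝ} (hf0 : ∀ x, 0 ≤ f x)
    (hconc : ConcaveOn ℝ {x | 0 < f x} (fun x => Real.log (f x))) {t x y : ℝ}
    (htx : t ≤ x) (hxy : x ≤ y) :
    f t * f y ≤ f x * f (t + y - x) := by
  rcases (hf0 t).eq_or_lt with ht | ht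
  · rw [← ht, zero_mul]; exact mul_nonneg (hf0 x) (hf0 _)
  rcases (hf0 y).eq_or_lt with hy | hy
  · rw [← hy, mul_zero]; exact mul_nonneg (hf0 x) (hf0 _)
  have hIcc : Icc t y ⊆ {x | 0 < f x} := hconc.1.ordConnected.out ht hy
  have hx : 0 < f x := hIcc ⟨htx, hxy⟩
  have hz : 0 < f (t + y - x) := hIcc ⟨by linarith, by linarith⟩
  rw [← Real.log_le_log_iff (mul_pos ht hy) (mul_pos hx hz),
    Real.log_mul ht.ne' hy.ne', Real.log_mul hx.ne' hz.ne']
  exact hconc.map_add_map_le_map_add_map ht hy htx hxy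

theorem setIntegral_comp_add_right (f : ℝ → ℝ) (c : ℝ) (s : Set ℝ) :
    ∫ t in (· + c) ⁻¹' s, f (t + c) = ∫ t in s, f t :=
  (measurePreserving_add_right volume c).setIntegral_preimage_emb
    (measurableEmbedding_addRight c) f s

section LogConcave

variable {f : ℝ → ℝ} (hf0 : ∀ x, 0 ≤ f x)
  (hconc : ConcaveOn ℝ {x | 0 < f x} (fun x => Real.log (f x))) (hint : Integrable f)
include hf0 hconc hint

theorem mul_setIntegral_Iic_le_of_concaveOn_log {x y : ℝ} (hxy : x ≤ y) :
    f y * ∫ t in Iic x, f t ≤ f x * ∫ t in Iic y, f t := by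
  calc f y * ∫ t in Iic x, f t = ∫ t in Iic x, f y * f t := (integral_const_mul _ _).symm
    _ ≤ ∫ t in Iic x, f x * f (t + (y - x)) := by
        refine setIntegral_mono_on (hint.const_mul _).integrableOn
          ((hint.comp_add_right _).const_mul _).integrableOn measurableSet_Iic fun t ht => ?_
        simpa only [mul_comm (f t), add_sub_assoc] using
          mul_le_mul_add_sub_of_concaveOn_log hf0 hconc ht hxy
    _ = f x * ∫ t in Iic y, f t := by
        rw [integral_const_mul, ← setIntegral_comp_add_right f (y - x), preimage_add_const_Iic,
          sub_sub_cancel]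

theorem mul_setIntegral_Ioi_le_of_concaveOn_log {x y : ℝ} (hxy : x ≤ y) :
    f x * ∫ t in Ioi y, f t ≤ f y * ∫ t in Ioi x, f t := by
  calc f x * ∫ t in Ioi y, f t = ∫ t in Ioi y, f x * f t := (integral_const_mul _ _).symm
    _ ≤ ∫ t in Ioi y, f y * f (t + (x - y)) := by
        refine setIntegral_mono_on (hint.const_mul _).integrableOn
          ((hint.comp_add_right _).const_mul _).integrableOn measurableSet_Ioi fun t ht => ?_
        simpa only [add_comm x, add_sub_assoc] using
          mul_le_mul_add_sub_of_concaveOn_log hf0 hconc hxy (le_of_lt ht)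
    _ = f y * ∫ t in Ioi x, f t := by
        rw [integral_const_mul, ← setIntegral_comp_add_right f (x - y), preimage_add_const_Ioi,
          sub_sub_cancel]

end LogConcave

/-- If `f` is a log-concave probability density on ℝ with distribution function `F`,
then `f/F` is non-increasing and `f/(1-F)` is non-decreasing on `{x | 0 < F x < 1}`. -/
theorem logconcave_hazard_monotone
    (f F : ℝ → ℝ)
    (hf0 : ∀ x, 0 ≤ f x)
    (hdens : (∫ x, f x) = 1)
    (hconc : ConcaveOn ℝ {x | 0 < f x} (fun x => Real.log (f x)))
    (hF : ∀ x, F x = ∫ t in Set.Iic x, f t) :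
    AntitoneOn (fun x => f x / F x) {x | 0 < F x ∧ F x < 1} ∧
    MonotoneOn (fun x => f x / (1 - F x)) {x | 0 < F x ∧ F x < 1} := by
  have hint : Integrable f := Integrable.of_integral_ne_zero (by rw [hdens]; exact one_ne_zero)
  have htail (x : ℝ) : 1 - F x = ∫ t in Ioi x, f t := by
    rw [← hdens, ← integral_add_compl measurableSet_Iic hint, compl_Iic, hF, add_sub_cancel_left]
  constructor
  · intro a ha b hb hab
    rw [div_le_div_iff₀ hb.1 ha.1, hF, hF]
    exact mul_setIntegral_Iic_le_of_concaveOn_log hf0 hconc hint hab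
  · intro a ha b hb hab
    rw [div_le_div_iff₀ (sub_pos.2 ha.2) (sub_pos.2 hb.2), htail, htail]
    exact mul_setIntegral_Ioi_le_of_concaveOn_log hf0 hconc hint hab
end

section
/- Let f be a log-concave probability density with distribution function F, and let m = F^{-1}(1/2) be a median. Then for every x ∈ ℝ, f(x) ≥ 2 f(m) · min(F(x), 1 - F(x)). -/
/-!
For `x < m` with `0 < f x < f m`, let `c` be the slope of `log f` between `x` and `m`.
Log-concavity puts `f` below `t ↦ f x * exp (c * (t - x))` to the left of `x` and above it on
`[x, m]`; integrating gives `c * F x ≤ f x` and `f m - f x ≤ c * (F m - F x)`, hence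
`f m * F x ≤ f x * F m`. With `F m = 1 / 2` this is the claim for `x ≤ m`, and the case `m ≤ x`
follows by applying it to the log-concave density `t ↦ f (-t)`.
-/

open MeasureTheory Set Real

section Secant

variable {g : ℝ → ℝ} {s : Set ℝ} {x y t : ℝ}

theorem ConcaveOn.apply_le_add_slope_mul_of_le (hg : ConcaveOn ℝ s g) (ht : t ∈ s)
    (hy : y ∈ s) (htx : t ≤ x) (hxy : x < y) : g t ≤ g x + slope g x y * (t - x) := by
  rcases htx.eq_or_lt with rfl | htx
  · simp
  have h := hg.slope_anti_adjacent ht hy htx hxy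
  rw [← slope_def_field, le_div_iff₀ (sub_pos.2 htx)] at h
  linarith

theorem ConcaveOn.add_slope_mul_le_apply_of_mem_Icc (hg : ConcaveOn ℝ s g) (hx : x ∈ s)
    (hy : y ∈ s) (ht : t ∈ Icc x y) (hxy : x < y) : g x + slope g x y * (t - x) ≤ g t := by
  rcases ht.1.eq_or_lt with rfl | hxt
  · simp
  have h := hg.neg.secant_mono hx (hg.1.ordConnected.out hx hy ht) hy hxt.ne' hxy.ne' ht.2
  simp only [Pi.neg_apply, ← neg_sub', neg_div, neg_le_neg_iff, ← slope_def_field] at h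
  rw [slope_def_field g x t, le_div_iff₀ (sub_pos.2 hxt)] at h
  linarith

end Secant

section ExpIntegral

variable {c : ℝ}

theorem integral_Iic_exp_mul_sub (hc : 0 < c) (x y : ℝ) :
    ∫ t in Iic y, exp (c * (t - x)) = exp (c * (y - x)) / c := by
  simp_rw [mul_sub, exp_sub]
  rw [integral_div, integral_exp_mul_Iic hc]
  ring

theorem integrableOn_Iic_exp_mul_sub (hc : 0 < c) (x y : ℝ) :
    IntegrableOn (fun t => exp (c * (t - x))) (Iic y) := by
  simp_rw [mul_sub, exp_sub]
  exact (integrableOn_exp_mul_Iic hc y).div_const _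

theorem integral_Ioc_exp_mul_sub (hc : 0 < c) {x y : ℝ} (hxy : x ≤ y) :
    ∫ t in Ioc x y, exp (c * (t - x)) = (exp (c * (y - x)) - 1) / c := by
  rw [← intervalIntegral.integral_of_le hxy, ← intervalIntegral.integral_Iic_sub_Iic
    (integrableOn_Iic_exp_mul_sub hc x x) (integrableOn_Iic_exp_mul_sub hc x y),
    integral_Iic_exp_mul_sub hc, integral_Iic_exp_mul_sub hc, sub_self, mul_zero, exp_zero,
    sub_div]

end ExpIntegral

section LogConcave

variable {f : ℝ → ℝ} {x m t : ℝ}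

theorem le_mul_exp_slope_log_mul_of_le
    (hconc : ConcaveOn ℝ {x | 0 < f x} fun x => log (f x)) (hx : 0 < f x) (hm : 0 < f m)
    (htx : t ≤ x) (hxm : x < m) :
    f t ≤ f x * exp (slope (fun x => log (f x)) x m * (t - x)) := by
  rcases le_or_gt (f t) 0 with ht | ht
  · exact ht.trans (by positivity)
  have h := hconc.apply_le_add_slope_mul_of_le ht hm htx hxm
  calc f t = exp (log (f t)) := (exp_log ht).symm
    _ ≤ exp (log (f x) + slope (fun x => log (f x)) x m * (t - x)) := exp_le_exp.2 h
    _ = _ := by rw [exp_add, exp_log hx]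

theorem mul_exp_slope_log_mul_le_of_mem_Icc
    (hconc : ConcaveOn ℝ {x | 0 < f x} fun x => log (f x)) (hx : 0 < f x) (hm : 0 < f m)
    (ht : t ∈ Icc x m) (hxm : x < m) :
    f x * exp (slope (fun x => log (f x)) x m * (t - x)) ≤ f t := by
  have h := hconc.add_slope_mul_le_apply_of_mem_Icc hx hm ht hxm
  calc f x * exp (slope (fun x => log (f x)) x m * (t - x))
      = exp (log (f x) + slope (fun x => log (f x)) x m * (t - x)) := by rw [exp_add, exp_log hx]
    _ ≤ exp (log (f t)) := exp_le_exp.2 h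
    _ = f t := exp_log (hconc.1.ordConnected.out hx hm ht)

theorem slope_log_pos (hx : 0 < f x) (hxm : x < m) (hlt : f x < f m) :
    0 < slope (fun x => log (f x)) x m := by
  rw [slope_def_field]
  exact div_pos (sub_pos.2 (log_lt_log hx hlt)) (sub_pos.2 hxm)

theorem slope_log_mul_integral_Iic_le
    (hconc : ConcaveOn ℝ {x | 0 < f x} fun x => log (f x)) (hint : IntegrableOn f (Iic x))
    (hx : 0 < f x) (hxm : x < m) (hlt : f x < f m) :
    slope (fun x => log (f x)) x m * ∫ t in Iic x, f t ≤ f x := by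
  have hc := slope_log_pos hx hxm hlt
  have h := setIntegral_mono_on hint ((integrableOn_Iic_exp_mul_sub hc x x).const_mul (f x))
    measurableSet_Iic fun t ht => le_mul_exp_slope_log_mul_of_le hconc hx (hx.trans hlt) ht hxm
  rw [integral_const_mul, integral_Iic_exp_mul_sub hc, sub_self, mul_zero, exp_zero,
    mul_one_div, le_div_iff₀ hc, mul_comm] at h
  exact h

theorem sub_le_slope_log_mul_integral_Ioc
    (hconc : ConcaveOn ℝ {x | 0 < f x} fun x => log (f x)) (hint : IntegrableOn f (Ioc x m))
    (hx : 0 < f x) (hxm : x < m) (hlt : f x < f m) :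
    f m - f x ≤ slope (fun x => log (f x)) x m * ∫ t in Ioc x m, f t := by
  have hc := slope_log_pos hx hxm hlt
  have h := setIntegral_mono_on
    (((integrableOn_Iic_exp_mul_sub hc x m).mono_set Ioc_subset_Iic_self).const_mul (f x)) hint
    measurableSet_Ioc fun t ht =>
      mul_exp_slope_log_mul_le_of_mem_Icc hconc hx (hx.trans hlt) (Ioc_subset_Icc_self ht) hxm
  have hexp : exp (slope (fun x => log (f x)) x m * (m - x)) = f m / f x := by
    rw [slope_def_field, div_mul_cancel₀ _ (sub_pos.2 hxm).ne', exp_sub, exp_log hx,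
      exp_log (hx.trans hlt)]
  rw [integral_const_mul, integral_Ioc_exp_mul_sub hc hxm.le, hexp, mul_div_assoc'] at h
  rw [← div_le_iff₀' hc]
  calc (f m - f x) / _ = f x * (f m / f x - 1) / _ := by field_simp
    _ ≤ _ := h

theorem mul_integral_Iic_le_mul_integral_Iic (hf0 : ∀ x, 0 ≤ f x)
    (hconc : ConcaveOn ℝ {x | 0 < f x} fun x => log (f x)) (hint : IntegrableOn f (Iic m))
    (hxm : x ≤ m) :
    f m * ∫ t in Iic x, f t ≤ f x * ∫ t in Iic m, f t := by
  have hIx : IntegrableOn f (Iic x) := hint.mono_set (Iic_subset_Iic.2 hxm)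
  have hIoc : IntegrableOn f (Ioc x m) := hint.mono_set Ioc_subset_Iic_self
  have hsplit : ∫ t in Iic m, f t = (∫ t in Iic x, f t) + ∫ t in Ioc x m, f t := by
    rw [← setIntegral_union (Iic_disjoint_Ioc le_rfl) measurableSet_Ioc hIx hIoc,
      Iic_union_Ioc_eq_Iic hxm]
  have hA : 0 ≤ ∫ t in Iic x, f t := setIntegral_nonneg measurableSet_Iic fun t _ => hf0 t
  have hB : 0 ≤ ∫ t in Ioc x m, f t := setIntegral_nonneg measurableSet_Ioc fun t _ => hf0 t
  rw [hsplit]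
  rcases le_or_gt (f m) (f x) with hle | hlt
  · nlinarith [hf0 m]
  have hxm : x < m := hxm.lt_of_ne (by rintro rfl; exact hlt.false)
  rcases (hf0 x).eq_or_lt with hx0 | hx0
  · have hvanish : ∀ t ∈ Iic x, f t = 0 := by
      intro t ht
      by_contra hne
      exact (hconc.1.ordConnected.out ((hf0 t).lt_of_ne' hne) (hx0 ▸ hlt) ⟨ht, hxm.le⟩).ne hx0
    rw [setIntegral_congr_fun measurableSet_Iic hvanish, ← hx0]
    simp
  · -- with `A`, `B` the integrals over `Iic x`, `Ioc x m` and `c` the slope: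
    -- `f m * A ≤ (f x + c * B) * A ≤ f x * (A + B)`
    nlinarith [slope_log_mul_integral_Iic_le hconc hIx hx0 hxm hlt,
      sub_le_slope_log_mul_integral_Ioc hconc hIoc hx0 hxm hlt]

end LogConcave

theorem integral_Iic_comp_neg_eq_one_sub {f : ℝ → ℝ} (hint : Integrable f)
    (hdens : ∫ x, f x = 1) (x : ℝ) :
    ∫ t in Iic (-x), f (-t) = 1 - ∫ t in Iic x, f t := by
  rw [integral_comp_neg_Iic, neg_neg, ← hdens,
    ← intervalIntegral.integral_Iic_add_Ioi hint.integrableOn hint.integrableOn]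
  ring

/-- If `f` is a log-concave probability density with distribution function `F` and median `m`,
then `f x ≥ 2 f(m) · min(F x, 1 - F x)` for every `x`. -/
theorem logconcave_density_ge_min_cdf
    (f F : ℝ → ℝ) (m : ℝ)
    (hf0 : ∀ x, 0 ≤ f x)
    (hdens : (∫ x, f x) = 1)
    (hconc : ConcaveOn ℝ {x | 0 < f x} (fun x => Real.log (f x)))
    (hF : ∀ x, F x = ∫ t in Set.Iic x, f t)
    (hm : F m = 1 / 2) :
    ∀ x : ℝ, 2 * f m * min (F x) (1 - F x) ≤ f x := by
  intro x
  have hint : Integrable f := .of_integral_ne_zero (by simp [hdens])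
  have hfm : 0 ≤ 2 * f m := by linarith [hf0 m]
  rcases le_total x m with hxm | hmx
  · have h := mul_integral_Iic_le_mul_integral_Iic hf0 hconc hint.integrableOn hxm
    rw [← hF, ← hF, hm] at h
    calc 2 * f m * min (F x) (1 - F x) ≤ 2 * f m * F x := by gcongr; exact min_le_left _ _
      _ ≤ f x := by linarith
  · have h := mul_integral_Iic_le_mul_integral_Iic (f := fun t => f (-t)) (fun t => hf0 (-t))
      (hconc.comp_linearMap (-LinearMap.id)) hint.comp_neg.integrableOn (neg_le_neg hmx)
    simp only [integral_Iic_comp_neg_eq_one_sub hint hdens, neg_neg, ← hF, hm] at h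
    calc 2 * f m * min (F x) (1 - F x) ≤ 2 * f m * (1 - F x) := by gcongr; exact min_le_right _ _
      _ ≤ f x := by linarith
end

section
/- Let f be a log-concave probability density on ℝ and let x, y ∈ ℝ with 0 < f(x) ≤ f(y) and x ≠ y. Then f(y) ≤ (1 + log(f(y)/f(x))) / |y - x|. -/
/-!
Log-concavity along the segment from `y` to `x` gives
`f (y + t (x - y)) ≥ f y · exp (-c t)` for `t ∈ [0, 1]`, where `c = log (f y / f x) ≥ 0`.
Integrating over the segment, whose length is `|y - x|`, and using `∫ f = 1`,
`f y · |y - x| · ∫₀¹ exp (-c t) dt ≤ 1`, and `∫₀¹ exp (-c t) dt = (1 - e⁻ᶜ) / c ≥ 1 / (1 + c)`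
because `1 + c ≤ eᶜ`.
-/

open MeasureTheory Real intervalIntegral

theorem one_div_one_add_le_integral_exp_neg_mul {c : ℝ} (hc : 0 ≤ c) :
    1 / (1 + c) ≤ ∫ t in (0 : ℝ)..1, exp (-(c * t)) := by
  rcases hc.eq_or_lt with rfl | hc
  · simp
  have hint : ∫ t in (0 : ℝ)..1, exp (-(c * t)) = (1 - exp (-c)) / c := by
    simp_rw [← neg_mul]
    rw [integral_comp_mul_left (fun u => exp u) (neg_ne_zero.2 hc.ne'), integral_exp,
      mul_zero, mul_one, exp_zero, smul_eq_mul]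
    field_simp
    ring
  have hexp : exp (-c) * (1 + c) ≤ 1 := by
    calc exp (-c) * (1 + c) ≤ exp (-c) * exp c := by gcongr; linarith [add_one_le_exp c]
      _ = 1 := by rw [← exp_add, neg_add_cancel, exp_zero]
  rw [hint, div_le_div_iff₀ (by linarith) hc]
  linarith

theorem mul_exp_neg_mul_log_div_le_of_concaveOn_log {E : Type*} [AddCommGroup E] [Module ℝ E]
    {f : E → ℝ} (hconc : ConcaveOn ℝ {z | 0 < f z} (fun z => log (f z)))
    {x y : E} (hx : 0 < f x) (hy : 0 < f y) {t : ℝ} (ht₀ : 0 ≤ t) (ht₁ : t ≤ 1) :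
    f y * exp (-(log (f y / f x) * t)) ≤ f ((1 - t) • y + t • x) := by
  have ht : 1 - t + t = 1 := sub_add_cancel 1 t
  have hz : 0 < f ((1 - t) • y + t • x) := hconc.1 hy hx (sub_nonneg.2 ht₁) ht₀ ht
  have hlog := hconc.2 hy hx (sub_nonneg.2 ht₁) ht₀ ht
  simp only [smul_eq_mul] at hlog
  calc f y * exp (-(log (f y / f x) * t))
      = exp (log (f y) + -((log (f y) - log (f x)) * t)) := by
        rw [log_div hy.ne' hx.ne', exp_add, exp_log hy]
    _ = exp ((1 - t) * log (f y) + t * log (f x)) := by ring_nf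
    _ ≤ exp (log (f ((1 - t) • y + t • x))) := exp_le_exp.2 hlog
    _ = f ((1 - t) • y + t • x) := exp_log hz

/-- For a log-concave probability density `f` and points `x ≠ y` with `0 < f x ≤ f y`,
one has `f y ≤ (1 + log(f y / f x)) / |y - x|`. -/
theorem logconcave_mode_bound
    (f : ℝ → ℝ) (x y : ℝ)
    (hf0 : ∀ z, 0 ≤ f z)
    (hdens : (∫ z, f z) = 1)
    (hconc : ConcaveOn ℝ {z | 0 < f z} (fun z => Real.log (f z)))
    (hx : 0 < f x) (hxy : f x ≤ f y) (hne : x ≠ y) :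
    f y ≤ (1 + Real.log (f y / f x)) / |y - x| := by
  have hy : 0 < f y := hx.trans_le hxy
  set c := log (f y / f x)
  have hc : 0 ≤ c := log_nonneg ((one_le_div hx).2 hxy)
  have hfi : Integrable f := .of_integral_ne_zero (by simp [hdens])
  set g := fun t => f (y + (x - y) * t)
  have hgi : Integrable g := (hfi.comp_add_left y).comp_mul_left' (sub_ne_zero.2 hne)
  have hg : ∫ t, g t = |y - x|⁻¹ := by
    rw [Measure.integral_comp_mul_left (fun u => f (y + u)), integral_add_left_eq_self, hdens,
      abs_inv, abs_sub_comm, smul_eq_mul, mul_one]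
  have key : f y / (1 + c) ≤ |y - x|⁻¹ :=
    calc f y / (1 + c) = f y * (1 / (1 + c)) := by ring
      _ ≤ f y * ∫ t in (0 : ℝ)..1, exp (-(c * t)) :=
        mul_le_mul_of_nonneg_left (one_div_one_add_le_integral_exp_neg_mul hc) hy.le
      _ = ∫ t in (0 : ℝ)..1, f y * exp (-(c * t)) :=
        (intervalIntegral.integral_const_mul _ _).symm
      _ ≤ ∫ t in (0 : ℝ)..1, g t := by
        refine integral_mono_on zero_le_one
          ((by fun_prop : Continuous _).intervalIntegrable _ _) hgi.intervalIntegrable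
          fun t ht => ?_
        have hseg : (1 - t) • y + t • x = y + (x - y) * t := by simp only [smul_eq_mul]; ring
        simpa only [hseg] using mul_exp_neg_mul_log_div_le_of_concaveOn_log hconc hx hy ht.1 ht.2
      _ ≤ ∫ t, g t := by
        rw [integral_of_le zero_le_one]
        exact setIntegral_le_integral hgi (.of_forall fun _ => hf0 _)
      _ = |y - x|⁻¹ := hg
  rwa [div_le_iff₀ (by positivity), inv_mul_eq_div] at key
end

section
/- Let f be a log-concave probability density with distribution function G and suppose f(x) ≥ ω · min(G(x), 1 - G(x)) for all x, with ω > 0, and that f is symmetric about 0. Then for any η ∈ (0, 1/2), the (1-η)-quantile satisfies G^{-1}(1-η) ≤ (log(1/(2η)))/ω. -/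
open MeasureTheory Set Filter

/-!
By symmetry the survival function `S = 1 - G` equals `1/2` at `0`. On `[0, ∞)` we have
`G ≥ 1/2`, so the hypothesis reads `f ≥ ω S`, and since `S` is antitone,
`S a - S b = ∫_a^b f ≥ ω (b - a) S b` for `0 ≤ a ≤ b`. Chaining this over a partition of `[0, x]`
into `n` equal pieces gives `S x (1 + ω x / n)^n ≤ S 0`, and letting `n → ∞` gives
`S x ≤ e^{-ω x} / 2`, which equals `η` at `x = log (1 / (2η)) / ω`.
-/

section DiscreteGronwall

variable {S : ℝ → ℝ} {c : ℝ}

theorem mul_one_add_pow_le_of_forall_mul_one_add_le (hc : 0 ≤ c)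
    (hS : ∀ a b, 0 ≤ a → a ≤ b → S b * (1 + c * (b - a)) ≤ S a)
    {δ : ℝ} (hδ : 0 ≤ δ) (k : ℕ) :
    S (k * δ) * (1 + c * δ) ^ k ≤ S 0 := by
  induction k with
  | zero => simp
  | succ k ih =>
    have hstep := hS (k * δ) ((k + 1 : ℕ) * δ) (by positivity)
      (mul_le_mul_of_nonneg_right (by norm_cast; omega) hδ)
    have hlen : ((k + 1 : ℕ) : ℝ) * δ - k * δ = δ := by push_cast; ring
    rw [hlen] at hstep
    calc S ((k + 1 : ℕ) * δ) * (1 + c * δ) ^ (k + 1)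
        = S ((k + 1 : ℕ) * δ) * (1 + c * δ) * (1 + c * δ) ^ k := by ring
      _ ≤ S (k * δ) * (1 + c * δ) ^ k := by gcongr
      _ ≤ S 0 := ih

theorem mul_exp_le_of_forall_mul_one_add_le (hc : 0 ≤ c)
    (hS : ∀ a b, 0 ≤ a → a ≤ b → S b * (1 + c * (b - a)) ≤ S a)
    {x : ℝ} (hx : 0 ≤ x) :
    S x * Real.exp (c * x) ≤ S 0 := by
  refine le_of_tendsto ((Real.tendsto_one_add_div_pow_exp (c * x)).const_mul (S x)) ?_
  filter_upwards [eventually_gt_atTop 0] with n hn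
  have hpow := mul_one_add_pow_le_of_forall_mul_one_add_le hc hS (div_nonneg hx n.cast_nonneg) n
  rwa [mul_div_cancel₀ x (by positivity), ← mul_div_assoc] at hpow

end DiscreteGronwall

section Density

variable {f : ℝ → ℝ}

theorem monotone_integral_Iic (hf0 : ∀ x, 0 ≤ f x) (hf : Integrable f) :
    Monotone fun x => ∫ t in Iic x, f t :=
  fun _ _ hab => setIntegral_mono_set hf.integrableOn (ae_of_all _ hf0)
    (Iic_subset_Iic.2 hab).eventuallyLE

theorem integral_Iic_zero_of_even (hsym : ∀ x, f (-x) = f x) (hf : Integrable f) :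
    ∫ t in Iic 0, f t = (∫ x, f x) / 2 := by
  have hhalves : ∫ t in Iic 0, f t = ∫ t in Ioi 0, f t := by
    simpa only [hsym, neg_zero] using integral_comp_neg_Iic 0 f
  have hsplit := intervalIntegral.integral_Iic_add_Ioi (b := 0) hf.integrableOn hf.integrableOn
  linarith

theorem one_sub_mul_one_add_le_one_sub {G : ℝ → ℝ} {ω : ℝ} (hω : 0 ≤ ω)
    (hf0 : ∀ x, 0 ≤ f x) (hf : Integrable f) (hG : ∀ x, G x = ∫ t in Iic x, f t)
    (hG0 : G 0 = 1 / 2) (hbound : ∀ x, ω * min (G x) (1 - G x) ≤ f x)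
    {a b : ℝ} (ha : 0 ≤ a) (hab : a ≤ b) :
    (1 - G b) * (1 + ω * (b - a)) ≤ 1 - G a := by
  have hmono : Monotone G := by
    simpa only [← funext hG] using monotone_integral_Iic hf0 hf
  have hlower : ∀ x ∈ Ioc a b, ω * (1 - G b) ≤ f x := by
    intro x hx
    have hGx : 1 / 2 ≤ G x := hG0 ▸ hmono (ha.trans hx.1.le)
    calc ω * (1 - G b) ≤ ω * (1 - G x) := by gcongr; exact hmono hx.2
      _ = ω * min (G x) (1 - G x) := by rw [min_eq_right (by linarith)]
      _ ≤ f x := hbound x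
  have hincr : G b - G a = ∫ x in Ioc a b, f x := by
    rw [hG, hG, intervalIntegral.integral_Iic_sub_Iic hf.integrableOn hf.integrableOn,
      intervalIntegral.integral_of_le hab]
  have hmass := setIntegral_ge_of_const_le_real measurableSet_Ioc measure_Ioc_lt_top.ne hlower
    hf.integrableOn
  rw [Real.volume_real_Ioc_of_le hab, ← hincr] at hmass
  linarith

end Density

theorem quantile_log_bound_general
    (f G : ℝ → ℝ) (ω η : ℝ)
    (hf0 : ∀ x, 0 ≤ f x)
    (hdens : (∫ x, f x) = 1)
    (hsym : ∀ x, f (-x) = f x)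
    (hG : ∀ x, G x = ∫ t in Set.Iic x, f t)
    (hω : 0 < ω)
    (hbound : ∀ x, ω * min (G x) (1 - G x) ≤ f x)
    (hη₀ : 0 < η) (hη₁ : η < 1 / 2) :
    sInf {x : ℝ | 1 - η ≤ G x} ≤ Real.log (1 / (2 * η)) / ω := by
  have hf : Integrable f := .of_integral_ne_zero (by rw [hdens]; exact one_ne_zero)
  have hmono : Monotone G := by
    simpa only [← funext hG] using monotone_integral_Iic hf0 hf
  have hG0 : G 0 = 1 / 2 := by rw [hG, integral_Iic_zero_of_even hsym hf, hdens]
  set L := Real.log (1 / (2 * η)) / ω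
  have hL0 : 0 ≤ L := div_nonneg (Real.log_nonneg (by rw [le_div_iff₀ (by linarith)]; linarith))
    hω.le
  have htail : (1 - G L) * Real.exp (ω * L) ≤ 1 - G 0 :=
    mul_exp_le_of_forall_mul_one_add_le hω.le
      (fun _ _ ha hab => one_sub_mul_one_add_le_one_sub hω.le hf0 hf hG hG0 hbound ha hab) hL0
  rw [mul_div_cancel₀ _ hω.ne', Real.exp_log (by positivity), hG0, mul_one_div,
    div_le_iff₀ (by linarith)] at htail
  refine csInf_le ⟨0, fun x hx => ?_⟩ (show 1 - η ≤ G L by nlinarith)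
  by_contra! hx0
  have : G x ≤ 1 / 2 := hG0 ▸ hmono hx0.le
  linarith [show 1 - η ≤ G x from hx]

/-- For a log-concave probability density `f` symmetric about `0` with distribution function `G`
satisfying `f x ≥ ω · min(G x, 1 - G x)` for all `x` with `ω > 0`, the `(1-η)`-quantile of `G`
is at most `log(1/(2η))/ω` for any `η ∈ (0, 1/2)`. -/
theorem quantile_log_bound
    (f G : ℝ → ℝ) (ω η : ℝ)
    (hf0 : ∀ x, 0 ≤ f x)
    (hdens : (∫ x, f x) = 1)
    (hconc : ConcaveOn ℝ {x | 0 < f x} (fun x => Real.log (f x)))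
    (hsym : ∀ x, f (-x) = f x)
    (hG : ∀ x, G x = ∫ t in Set.Iic x, f t)
    (hω : 0 < ω)
    (hbound : ∀ x, ω * min (G x) (1 - G x) ≤ f x)
    (hη₀ : 0 < η) (hη₁ : η < 1 / 2) :
    sInf {x : ℝ | 1 - η ≤ G x} ≤ Real.log (1 / (2 * η)) / ω :=
  quantile_log_bound_general f G ω η hf0 hdens hsym hG hω hbound hη₀ hη₁
end

section
/- Let ψ be a concave function symmetric about 0 with e^ψ a probability density, and let F be a distribution function with finite first moment. If θ_k → ±∞ (|θ_k| → ∞), then limsup_k [∫ ψ(x - θ_k) dF(x) - 1] = -∞. In particular the location log-likelihood criterion Ψ(θ, ψ) = ∫ ψ(x-θ) dF(x) - ∫ e^{ψ(x)} dx tends to -∞ uniformly over such ψ as |θ| → ∞. -/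
/-!
If `φ` is even and concave then `φ` decreases in `|z|`, so `∫ e^φ = 1` forces
`2z e^{φ z} ≤ 1`, i.e. `φ z ≤ -log (2z)`; with concavity at `z/2` this gives
`φ 0 + φ z ≤ -2 log z`. Once `|t|` is large, the ball of radius `r` around `t` carries at most
half of the mass of `μ`, and `φ (x - t)` is at most `φ 0` on it and at most `φ r` off it, so
`∫ φ (x - t) dμ ≤ (φ 0 + φ r) / 2 ≤ -log r`, uniformly in `φ`. Choosing `r = e^{-M}` gives
the bound `M`.
-/

open MeasureTheory Set Filter Metric
open scoped ENNReal

structure IsEvenConcaveLogDensity (φ : ℝ → ℝ) : Prop where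
  even : ∀ z, φ (-z) = φ z
  concaveOn : ConcaveOn ℝ univ φ
  integral_exp : ∫ z, Real.exp (φ z) = 1

theorem ConcaveOn.apply_le_of_abs_le {φ : ℝ → ℝ} (hconc : ConcaveOn ℝ univ φ)
    (heven : ∀ z, φ (-z) = φ z) {x y : ℝ} (h : |x| ≤ |y|) : φ y ≤ φ x := by
  have habs : φ |y| = φ y := by
    rcases abs_choice y with hy | hy <;> rw [hy]
    exact heven y
  calc φ y = min (φ (-|y|)) (φ |y|) := by rw [heven, habs, min_self]
    _ ≤ φ x := hconc.min_le_of_mem_Icc trivial trivial (abs_le.1 h)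

namespace IsEvenConcaveLogDensity

variable {φ : ℝ → ℝ} (hφ : IsEvenConcaveLogDensity φ)
include hφ

theorem integrable_exp : Integrable fun z => Real.exp (φ z) :=
  .of_integral_ne_zero (by rw [hφ.integral_exp]; exact one_ne_zero)

theorem le_neg_log_two_mul {z : ℝ} (hz : 0 < z) : φ z ≤ -Real.log (2 * z) := by
  have hmass : 2 * z * Real.exp (φ z) ≤ 1 := calc
    2 * z * Real.exp (φ z) = ∫ _ in Ioc (-z) z, Real.exp (φ z) := by
      rw [setIntegral_const, measureReal_def, Real.volume_Ioc, smul_eq_mul,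
        ENNReal.toReal_ofReal (by linarith)]
      ring
    _ ≤ ∫ x in Ioc (-z) z, Real.exp (φ x) := by
      refine setIntegral_mono_on (integrableOn_const measure_Ioc_lt_top.ne)
        hφ.integrable_exp.integrableOn measurableSet_Ioc fun x hx => ?_
      refine Real.exp_le_exp.2 (hφ.concaveOn.apply_le_of_abs_le hφ.even ?_)
      rw [abs_of_pos hz]
      exact abs_le.2 ⟨hx.1.le, hx.2⟩
    _ ≤ ∫ x, Real.exp (φ x) :=
      setIntegral_le_integral hφ.integrable_exp (ae_of_all _ fun x => (Real.exp_pos _).le)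
    _ = 1 := hφ.integral_exp
  have hexp : Real.exp (φ z) ≤ 1 / (2 * z) := by
    rw [le_div_iff₀ (by positivity)]
    linarith
  have := Real.log_le_log (Real.exp_pos _) hexp
  rwa [Real.log_exp, one_div, Real.log_inv] at this

theorem add_le_neg_two_mul_log {z : ℝ} (hz : 0 < z) : φ 0 + φ z ≤ -2 * Real.log z := by
  have hmid := hφ.concaveOn.2 (mem_univ 0) (mem_univ z) (by norm_num : (0 : ℝ) ≤ 1 / 2)
    (by norm_num : (0 : ℝ) ≤ 1 / 2) (by norm_num)
  simp only [smul_eq_mul, mul_zero, zero_add] at hmid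
  rw [show (1 / 2 : ℝ) * z = z / 2 by ring] at hmid
  have hhalf := hφ.le_neg_log_two_mul (half_pos hz)
  rw [mul_div_cancel₀ z two_ne_zero] at hhalf
  linarith

end IsEvenConcaveLogDensity

theorem exists_measure_ball_le {E : Type*} [PseudoMetricSpace E] [CompleteSpace E]
    [SecondCountableTopology E] [MeasurableSpace E] [BorelSpace E]
    (μ : Measure E) [IsFiniteMeasure μ] (x₀ : E) (r : ℝ) {ε : ℝ≥0∞} (hε : 0 < ε) :
    ∃ R : ℝ, ∀ t : E, R < dist t x₀ → μ (ball t r) ≤ ε := by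
  have htight := tendsto_measure_compl_closedBall_of_isTightMeasureSet
    (isTightMeasureSet_singleton (μ := μ)) x₀
  simp only [mem_singleton_iff, iSup_iSup_eq_left] at htight
  obtain ⟨R₀, hR₀⟩ := (htight.eventually (Iic_mem_nhds hε)).exists
  refine ⟨R₀ + r, fun t ht => (measure_mono fun x hx hx₀ => ?_).trans hR₀⟩
  have := dist_triangle t x x₀
  rw [mem_ball, dist_comm] at hx
  rw [mem_closedBall] at hx₀
  linarith

theorem integral_comp_sub_le_of_measureReal_ball_le {φ : ℝ → ℝ}
    (hconc : ConcaveOn ℝ univ φ) (heven : ∀ z, φ (-z) = φ z)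
    (μ : Measure ℝ) [IsProbabilityMeasure μ] {t r : ℝ} (hr : 0 ≤ r)
    (hint : Integrable (fun x => φ (x - t)) μ) (hball : μ.real (ball t r) ≤ 1 / 2) :
    ∫ x, φ (x - t) ∂μ ≤ (φ 0 + φ r) / 2 := by
  set s := ball t r
  have hin : ∫ x in s, φ (x - t) ∂μ ≤ μ.real s * φ 0 := by
    rw [← smul_eq_mul, ← setIntegral_const]
    refine setIntegral_mono_on hint.integrableOn (integrableOn_const (measure_ne_top _ _))
      isOpen_ball.measurableSet fun x _ => hconc.apply_le_of_abs_le heven ?_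
    simp
  have hout : ∫ x in sᶜ, φ (x - t) ∂μ ≤ (1 - μ.real s) * φ r := by
    rw [← probReal_compl_eq_one_sub isOpen_ball.measurableSet, ← smul_eq_mul,
      ← setIntegral_const]
    refine setIntegral_mono_on hint.integrableOn (integrableOn_const (measure_ne_top _ _))
      isOpen_ball.measurableSet.compl fun x hx => hconc.apply_le_of_abs_le heven ?_
    rw [mem_compl_iff, mem_ball, not_lt, Real.dist_eq] at hx
    rwa [abs_of_nonneg hr]
  have hr0 : φ r ≤ φ 0 := hconc.apply_le_of_abs_le heven (by simp)
  rw [← integral_add_compl (s := s) isOpen_ball.measurableSet hint]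
  nlinarith [mul_nonneg (sub_nonneg.2 hball) (sub_nonneg.2 hr0)]

theorem exists_forall_integral_comp_sub_le (μ : Measure ℝ) [IsProbabilityMeasure μ] (M : ℝ) :
    ∃ R : ℝ, ∀ t : ℝ, R < |t| → ∀ φ : ℝ → ℝ, IsEvenConcaveLogDensity φ →
      Integrable (fun x => φ (x - t)) μ → ∫ x, φ (x - t) ∂μ ≤ M := by
  set r := Real.exp (-M)
  obtain ⟨R, hR⟩ := exists_measure_ball_le μ 0 r (ENNReal.ofReal_pos.2 one_half_pos)
  refine ⟨R, fun t ht φ hφ hint => ?_⟩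
  have hball : μ.real (ball t r) ≤ 1 / 2 :=
    ENNReal.toReal_le_of_le_ofReal one_half_pos.le (hR t (by rwa [Real.dist_0_eq_abs]))
  calc ∫ x, φ (x - t) ∂μ
      ≤ (φ 0 + φ r) / 2 := integral_comp_sub_le_of_measureReal_ball_le hφ.concaveOn hφ.even μ
        (Real.exp_pos _).le hint hball
    _ ≤ -Real.log r := by linarith [hφ.add_le_neg_two_mul_log (Real.exp_pos (-M))]
    _ = M := by rw [Real.log_exp, neg_neg]

theorem location_criterion_tendsto_atBot_general
    (μ : Measure ℝ) [IsProbabilityMeasure μ]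
    (θ : ℕ → ℝ) (hθ : Tendsto (fun k => |θ k|) atTop atTop)
    (ψ : ℝ → ℝ)
    (hψsym : ∀ z, ψ (-z) = ψ z)
    (hψconc : ConcaveOn ℝ Set.univ ψ)
    (hψnorm : (∫ z, Real.exp (ψ z)) = 1)
    (hψint : ∀ k, Integrable (fun x => ψ (x - θ k)) μ) :
    Tendsto (fun k => (∫ x, ψ (x - θ k) ∂μ) - 1) atTop atBot ∧
    ∀ M : ℝ, ∃ R : ℝ, ∀ t : ℝ, R < |t| →
      ∀ φ : ℝ → ℝ, (∀ z, φ (-z) = φ z) → ConcaveOn ℝ Set.univ φ →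
        (∫ z, Real.exp (φ z)) = 1 → Integrable (fun x => φ (x - t)) μ →
        (∫ x, φ (x - t) ∂μ) - (∫ z, Real.exp (φ z)) < M := by
  refine ⟨tendsto_atBot.2 fun M => ?_, fun M => ?_⟩
  · obtain ⟨R, hR⟩ := exists_forall_integral_comp_sub_le μ (M + 1)
    filter_upwards [hθ.eventually_gt_atTop R] with k hk
    linarith [hR (θ k) hk ψ ⟨hψsym, hψconc, hψnorm⟩ (hψint k)]
  · obtain ⟨R, hR⟩ := exists_forall_integral_comp_sub_le μ M
    refine ⟨R, fun t ht φ hsym hconc hnorm hint => ?_⟩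
    linarith [hR t ht φ ⟨hsym, hconc, hnorm⟩ hint]

/-- For `ψ` concave, symmetric about `0`, with `∫ e^ψ = 1`, and `F` a non-degenerate
distribution with finite first moment: if `|θ_k| → ∞` then
`limsup_k [∫ ψ(x - θ_k) dF(x) - 1] = -∞` (the expression tends to `-∞`); in particular the
criterion `Ψ(θ,ψ) = ∫ ψ(x-θ) dF - ∫ e^ψ` tends to `-∞` uniformly over such `ψ` as `|θ| → ∞`. -/
theorem location_criterion_tendsto_atBot
    (μ : Measure ℝ) [IsProbabilityMeasure μ]
    (hmom : Integrable (fun x => |x|) μ)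
    (hnd : ∀ c : ℝ, μ ≠ Measure.dirac c)
    (θ : ℕ → ℝ) (hθ : Tendsto (fun k => |θ k|) atTop atTop)
    (ψ : ℝ → ℝ)
    (hψsym : ∀ z, ψ (-z) = ψ z)
    (hψconc : ConcaveOn ℝ Set.univ ψ)
    (hψnorm : (∫ z, Real.exp (ψ z)) = 1)
    (hψint : ∀ k, Integrable (fun x => ψ (x - θ k)) μ) :
    Tendsto (fun k => (∫ x, ψ (x - θ k) ∂μ) - 1) atTop atBot ∧
    ∀ M : ℝ, ∃ R : ℝ, ∀ t : ℝ, R < |t| →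
      ∀ φ : ℝ → ℝ, (∀ z, φ (-z) = φ z) → ConcaveOn ℝ Set.univ φ →
        (∫ z, Real.exp (φ z)) = 1 → Integrable (fun x => φ (x - t)) μ →
        (∫ x, φ (x - t) ∂μ) - (∫ z, Real.exp (φ z)) < M :=
  location_criterion_tendsto_atBot_general μ θ hθ ψ hψsym hψconc hψnorm hψint
end
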